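/- arXiv:1703.03092 — 4 statements merged into one kernel-verified Lean document; each statement's English description precedes it below -/
import Mathlib

section
/- For every nonnegative integer n, there exist integers a, b, c, d with a² + b² + c² + d² = n such that a + b + c + d is a perfect cube. -/
/-!
If `4n = s² + x² + y² + z²` with `s + x + y + z ≡ 0 (mod 4)` and `x ≡ y ≡ z (mod 2)`, then
`a, b, c, d = (s + x + y + z) / 4, (s + x - y - z) / 4, (s - x + y - z) / 4, (s - x - y + z) / 4`
satisfy `a² + b² + c² + d² = n` and `a + b + c + d = s`. So it suffices to write `4n - s²` as a
sum of three squares for a cube `s`: `s = 1` for odd `n` (then `4n - 1 ≡ 3 mod 8`), `s = 0` for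
even `n` not of the form `4ᵏ(8l + 7)`, `s = 8` for `n = 4ᵏ(8l + 7)` with `k = 1, 2`, while for
`64 ∣ n` a representation of `n / 64` is scaled by `8`.

The three squares come from Legendre's theorem for `m ≡ 1, 2, 3, 5, 6 (mod 8)`, proved as
Dirichlet did: a prime `p` in a suitable arithmetic progression makes `-m` a square modulo `p`,
which produces a positive definite integral ternary form of determinant `1` representing `m`.
Such a form only represents sums of three squares: taking a minimal vector as first basis
vector and completing the square leaves a binary form of determinant equal to the minimum `μ`
and with minimum at least `3μ²/4`, so Hermite's bound `3 μ'² ≤ 4 det` for binary forms forces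
`μ = 1`.
-/

open Matrix

def IsPrimitiveVector {n : Type*} (v : n → ℤ) : Prop := ∀ d : ℤ, (∀ i, d ∣ v i) → IsUnit d

theorem Int.exists_four_mul_sq_le (m t : ℤ) (hm : 0 < m) : ∃ x, 4 * (m * x + t) ^ 2 ≤ m ^ 2 := by
  refine ⟨-((2 * t + m) / (2 * m)), ?_⟩
  have hd := Int.mul_ediv_add_emod (2 * t + m) (2 * m)
  have hr0 : 0 ≤ (2 * t + m) % (2 * m) := Int.emod_nonneg _ (by omega)
  have hr : (2 * t + m) % (2 * m) < 2 * m := Int.emod_lt_of_pos _ (by omega)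
  nlinarith

theorem Int.sq_emod_four_eq_emod_two (x : ℤ) : x ^ 2 % 4 = x % 2 := by
  obtain ⟨k, rfl | rfl⟩ := Int.even_or_odd' x <;> ring_nf <;> omega

namespace Matrix

variable {n : Type*}

theorem PosDef.isSymm {S : Matrix n n ℤ} (hS : S.PosDef) : S.IsSymm := by
  simpa using hS.isHermitian

variable [Fintype n]

theorem dotProduct_transpose_mul_mul_mulVec (S U : Matrix n n ℤ) (w : n → ℤ) :
    w ⬝ᵥ (Uᵀ * S * U) *ᵥ w = (U *ᵥ w) ⬝ᵥ S *ᵥ (U *ᵥ w) := by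
  rw [← mulVec_mulVec, ← mulVec_mulVec, dotProduct_mulVec w, vecMul_transpose]

variable [DecidableEq n]

theorem PosDef.exists_primitive_min [Nonempty n] {S : Matrix n n ℤ} (hS : S.PosDef) :
    ∃ v, IsPrimitiveVector v ∧ ∀ w ≠ 0, v ⬝ᵥ S *ᵥ v ≤ w ⬝ᵥ S *ᵥ w := by
  have hpos : ∀ w ≠ 0, 0 < w ⬝ᵥ S *ᵥ w := fun w hw => by
    simpa using hS.dotProduct_mulVec_pos hw
  obtain ⟨i⟩ := ‹Nonempty n›
  obtain ⟨_, ⟨v, hv0, rfl⟩, hmin⟩ := Int.exists_least_of_bdd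
    (P := fun t => ∃ w ≠ 0, w ⬝ᵥ S *ᵥ w = t)
    ⟨0, by rintro _ ⟨w, hw, rfl⟩; exact (hpos w hw).le⟩ ⟨_, Pi.single i 1, by simp, rfl⟩
  refine ⟨v, fun d hd => ?_, fun w hw => hmin _ ⟨w, hw, rfl⟩⟩
  choose w hw using hd
  have hv : v = d • w := funext hw
  have hw0 : w ≠ 0 := by rintro rfl; exact hv0 (by simpa using hv)
  have hd0 : d ≠ 0 := by rintro rfl; exact hv0 (by simpa using hv)
  have hvw : v ⬝ᵥ S *ᵥ v = d ^ 2 * (w ⬝ᵥ S *ᵥ w) := by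
    rw [hv, mulVec_smul, smul_dotProduct, dotProduct_smul, smul_eq_mul, smul_eq_mul]; ring
  have hle := hmin _ ⟨w, hw0, rfl⟩
  have hwpos := hpos w hw0
  have hd2 : 0 < d ^ 2 := by positivity
  exact IsUnit.of_mul_eq_one d (by nlinarith)

theorem transpose_mul_mul_apply_self (S U : Matrix n n ℤ) (i : n) :
    (Uᵀ * S * U) i i = U.col i ⬝ᵥ S *ᵥ U.col i := by
  rw [← mulVec_single_one, ← dotProduct_transpose_mul_mul_mulVec]
  simp

theorem exists_dotProduct_transpose_mul_mul_mulVec_eq (S : Matrix n n ℤ) {U : Matrix n n ℤ}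
    (hU : U.det = 1) (x : n → ℤ) : ∃ w, w ⬝ᵥ (Uᵀ * S * U) *ᵥ w = x ⬝ᵥ S *ᵥ x :=
  ⟨adjugate U *ᵥ x, by
    rw [dotProduct_transpose_mul_mul_mulVec, mulVec_mulVec, mul_adjugate, hU, one_smul,
      one_mulVec]⟩

theorem PosDef.exists_transpose_mul_mul_min {S : Matrix n n ℤ} (hS : S.PosDef) (i : n)
    (hcompl : ∀ v, IsPrimitiveVector v → ∃ U : Matrix n n ℤ, U.det = 1 ∧ U.col i = v) :
    ∃ U : Matrix n n ℤ, U.det = 1 ∧ (Uᵀ * S * U).PosDef ∧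
      ∀ w ≠ 0, (Uᵀ * S * U) i i ≤ w ⬝ᵥ (Uᵀ * S * U) *ᵥ w := by
  have : Nonempty n := ⟨i⟩
  obtain ⟨v, hprim, hmin⟩ := hS.exists_primitive_min
  obtain ⟨U, hdet, hcol⟩ := hcompl v hprim
  have hinj : Function.Injective U.mulVec :=
    Function.LeftInverse.injective (g := (adjugate U *ᵥ ·)) fun w => by
      simp only [mulVec_mulVec, adjugate_mul, hdet, one_smul, one_mulVec]
  refine ⟨U, hdet, ?_, fun w hw => ?_⟩
  · simpa [conjTranspose_eq_transpose_of_trivial] using hS.conjTranspose_mul_mul_same hinj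
  · rw [transpose_mul_mul_apply_self, hcol, dotProduct_transpose_mul_mul_mulVec]
    exact hmin _ fun h => hw (hinj (by rw [h, mulVec_zero]))

theorem exists_det_eq_one_col_zero_eq_fin_two {v : Fin 2 → ℤ} (hv : IsPrimitiveVector v) :
    ∃ U : Matrix (Fin 2) (Fin 2) ℤ, U.det = 1 ∧ U.col 0 = v := by
  obtain ⟨a, b, hab⟩ : IsCoprime (v 0) (v 1) :=
    IsRelPrime.isCoprime fun d h0 h1 => hv d (Fin.forall_fin_two.mpr ⟨h0, h1⟩)
  refine ⟨!![v 0, -b; v 1, a], by rw [det_fin_two_of]; linarith, ?_⟩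
  ext j; fin_cases j <;> rfl

theorem exists_det_eq_one_col_zero_eq_fin_three {v : Fin 3 → ℤ} (hv : IsPrimitiveVector v) :
    ∃ U : Matrix (Fin 3) (Fin 3) ℤ, U.det = 1 ∧ U.col 0 = v := by
  by_cases h01 : v 0 = 0 ∧ v 1 = 0
  · have h2 : v 2 ^ 2 = 1 := by
      obtain h | h := Int.isUnit_iff.mp (hv (v 2) (by simp [Fin.forall_fin_succ, h01]))
      all_goals simp [h]
    refine ⟨!![0, 1, 0; 0, 0, v 2; v 2, 0, 0], ?_, by ext j; fin_cases j <;> simp [h01]⟩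
    rw [det_fin_three]
    simp only [of_apply, cons_val', cons_val, cons_val_zero, cons_val_one, cons_val_fin_one]
    linear_combination h2
  · have hbez := Int.gcd_eq_gcd_ab (v 0) (v 1)
    set α := Int.gcdA (v 0) (v 1)
    set β := Int.gcdB (v 0) (v 1)
    set g : ℤ := (Int.gcd (v 0) (v 1) : ℤ)
    have hg0 : g ≠ 0 := by simpa [g, Int.gcd_eq_zero_iff] using h01
    obtain ⟨γ, δ, hγδ⟩ : IsCoprime g (v 2) := IsRelPrime.isCoprime fun d hdg hd2 => hv d fun j => by
      fin_cases j
      exacts [hdg.trans (Int.gcd_dvd_left _ _), hdg.trans (Int.gcd_dvd_right _ _), hd2]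
    obtain ⟨p, hp⟩ : g ∣ v 0 := Int.gcd_dvd_left _ _
    obtain ⟨q, hq⟩ : g ∣ v 1 := Int.gcd_dvd_right _ _
    clear_value α β g
    have hpq : p * α + q * β = 1 :=
      mul_left_cancel₀ hg0 (by linear_combination -hbez - α * hp - β * hq)
    refine ⟨!![v 0, -β, -δ * p; v 1, α, -δ * q; v 2, 0, γ], ?_, by ext j; fin_cases j <;> rfl⟩
    rw [det_fin_three]
    simp only [of_apply, cons_val', cons_val, cons_val_zero, cons_val_one, cons_val_fin_one]
    linear_combination -γ * hbez + (v 2 * δ) * hpq + hγδ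

theorem IsSymm.dotProduct_mulVec_fin_two {S : Matrix (Fin 2) (Fin 2) ℤ} (hS : S.IsSymm)
    (x : Fin 2 → ℤ) : x ⬝ᵥ S *ᵥ x = S 0 0 * x 0 ^ 2 + 2 * S 0 1 * x 0 * x 1 + S 1 1 * x 1 ^ 2 := by
  simp only [dotProduct, mulVec, Fin.sum_univ_two, hS.apply 0 1]
  ring

theorem IsSymm.det_fin_two {S : Matrix (Fin 2) (Fin 2) ℤ} (hS : S.IsSymm) :
    S.det = S 0 0 * S 1 1 - S 0 1 ^ 2 := by
  rw [Matrix.det_fin_two, hS.apply 0 1]; ring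

theorem IsSymm.posDef_of_fin_two {S : Matrix (Fin 2) (Fin 2) ℤ} (hS : S.IsSymm)
    (h0 : 0 < S 0 0) (hdet : 0 < S.det) : S.PosDef := by
  refine PosDef.of_dotProduct_mulVec_pos (by simpa using hS) fun x hx => ?_
  have key : S 0 0 * (x ⬝ᵥ S *ᵥ x) = (S 0 0 * x 0 + S 0 1 * x 1) ^ 2 + S.det * x 1 ^ 2 := by
    rw [hS.dotProduct_mulVec_fin_two, hS.det_fin_two]; ring
  rw [star_trivial]
  by_contra! hle
  have hx1 : x 1 = 0 := by nlinarith [sq_nonneg (S 0 0 * x 0 + S 0 1 * x 1), sq_nonneg (x 1)]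
  have hx0 : x 0 = 0 := by
    rw [hx1] at key
    have : (S 0 0 * x 0) ^ 2 = 0 := by nlinarith [sq_nonneg (S 0 0 * x 0)]
    simpa [h0.ne'] using this
  exact hx (by ext i; fin_cases i <;> simp [hx0, hx1])

theorem PosDef.three_mul_sq_le_four_mul_det_of_min {G : Matrix (Fin 2) (Fin 2) ℤ}
    (hG : G.PosDef) (hmin : ∀ w ≠ 0, G 0 0 ≤ w ⬝ᵥ G *ᵥ w) : 3 * G 0 0 ^ 2 ≤ 4 * G.det := by
  have hm : 0 < G 0 0 := hG.diag_pos
  obtain ⟨t, ht⟩ := Int.exists_four_mul_sq_le (G 0 0) (G 0 1) hm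
  have h := hmin ![t, 1] (by simp [funext_iff, Fin.forall_fin_two])
  rw [hG.isSymm.dotProduct_mulVec_fin_two] at h
  simp only [cons_val_zero, cons_val_one, cons_val_fin_one] at h
  rw [hG.isSymm.det_fin_two]
  nlinarith [mul_le_mul_of_nonneg_left h hm.le]

theorem PosDef.exists_three_mul_sq_le_four_mul_det {S : Matrix (Fin 2) (Fin 2) ℤ}
    (hS : S.PosDef) : ∃ v ≠ 0, 3 * (v ⬝ᵥ S *ᵥ v) ^ 2 ≤ 4 * S.det := by
  obtain ⟨U, hU, hG, hmin⟩ :=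
    hS.exists_transpose_mul_mul_min 0 fun _ => exists_det_eq_one_col_zero_eq_fin_two
  have h := hG.three_mul_sq_le_four_mul_det_of_min hmin
  have h0 : 0 < (Uᵀ * S * U) 0 0 := hG.diag_pos
  rw [transpose_mul_mul_apply_self] at h h0
  exact ⟨U.col 0, fun h' => by simp [h'] at h0, by simpa [hU] using h⟩

theorem PosDef.exists_sq_add_sq_of_det_eq_one {S : Matrix (Fin 2) (Fin 2) ℤ}
    (hS : S.PosDef) (hdet : S.det = 1) (x : Fin 2 → ℤ) :
    ∃ a b : ℤ, x ⬝ᵥ S *ᵥ x = a ^ 2 + b ^ 2 := by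
  obtain ⟨U, hU, hG, hmin⟩ :=
    hS.exists_transpose_mul_mul_min 0 fun _ => exists_det_eq_one_col_zero_eq_fin_two
  set G := Uᵀ * S * U
  have hGdet : G.det = 1 := by simp [G, hU, hdet]
  have h := hG.three_mul_sq_le_four_mul_det_of_min hmin
  have h0 : 0 < G 0 0 := hG.diag_pos
  have h1 : G 0 0 = 1 := by nlinarith
  rw [hG.isSymm.det_fin_two, h1] at hGdet
  obtain ⟨w, hw⟩ := exists_dotProduct_transpose_mul_mul_mulVec_eq S hU x
  rw [← hw, hG.isSymm.dotProduct_mulVec_fin_two, h1]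
  exact ⟨w 0 + G 0 1 * w 1, w 1, by linear_combination (w 1 ^ 2) * hGdet⟩

theorem IsSymm.dotProduct_mulVec_fin_three {S : Matrix (Fin 3) (Fin 3) ℤ} (hS : S.IsSymm)
    (x : Fin 3 → ℤ) :
    x ⬝ᵥ S *ᵥ x = S 0 0 * x 0 ^ 2 + S 1 1 * x 1 ^ 2 + S 2 2 * x 2 ^ 2
      + 2 * (S 0 1 * x 0 * x 1 + S 0 2 * x 0 * x 2 + S 1 2 * x 1 * x 2) := by
  simp only [dotProduct, mulVec, Fin.sum_univ_three, hS.apply 0 1, hS.apply 0 2, hS.apply 1 2]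
  ring

/-- `S 0 0` times the Schur complement of the entry `S 0 0`. -/
def scaledSchur (S : Matrix (Fin 3) (Fin 3) ℤ) : Matrix (Fin 2) (Fin 2) ℤ :=
  !![S 0 0 * S 1 1 - S 0 1 ^ 2, S 0 0 * S 1 2 - S 0 1 * S 0 2;
     S 0 0 * S 1 2 - S 0 1 * S 0 2, S 0 0 * S 2 2 - S 0 2 ^ 2]

theorem isSymm_scaledSchur (S : Matrix (Fin 3) (Fin 3) ℤ) : S.scaledSchur.IsSymm := by
  ext i j; fin_cases i <;> fin_cases j <;> rfl

theorem IsSymm.mul_dotProduct_mulVec_eq_sq_add {S : Matrix (Fin 3) (Fin 3) ℤ} (hS : S.IsSymm)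
    (x : Fin 3 → ℤ) :
    S 0 0 * (x ⬝ᵥ S *ᵥ x) = (S 0 0 * x 0 + S 0 1 * x 1 + S 0 2 * x 2) ^ 2
      + vecTail x ⬝ᵥ S.scaledSchur *ᵥ vecTail x := by
  rw [hS.dotProduct_mulVec_fin_three, S.isSymm_scaledSchur.dotProduct_mulVec_fin_two]
  simp only [scaledSchur, of_apply, cons_val', cons_val_zero, cons_val_one, cons_val_fin_one,
    vecTail, Function.comp_apply, Fin.succ_zero_eq_one, Fin.succ_one_eq_two]
  ring

theorem IsSymm.det_scaledSchur {S : Matrix (Fin 3) (Fin 3) ℤ} (hS : S.IsSymm) :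
    S.scaledSchur.det = S 0 0 * S.det := by
  rw [Matrix.det_fin_two, det_fin_three, hS.apply 0 1, hS.apply 0 2, hS.apply 1 2]
  simp only [scaledSchur, of_apply, cons_val', cons_val_zero, cons_val_one, cons_val_fin_one]
  ring

theorem IsSymm.posDef_of_fin_three {S : Matrix (Fin 3) (Fin 3) ℤ} (hS : S.IsSymm)
    (h0 : 0 < S 0 0) (h1 : 0 < S 0 0 * S 1 1 - S 0 1 ^ 2) (hdet : 0 < S.det) : S.PosDef := by
  have hB : S.scaledSchur.PosDef := S.isSymm_scaledSchur.posDef_of_fin_two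
    (by simpa [scaledSchur] using h1) (by rw [hS.det_scaledSchur]; positivity)
  refine PosDef.of_dotProduct_mulVec_pos (by simpa using hS) fun x hx => ?_
  have key := hS.mul_dotProduct_mulVec_eq_sq_add x
  rw [star_trivial]
  by_cases htail : vecTail x = 0
  · have h1 : x 1 = 0 := congrFun htail 0
    have h2 : x 2 = 0 := congrFun htail 1
    have hx0 : x 0 ≠ 0 := fun h => hx (by ext i; fin_cases i <;> assumption)
    rw [htail, zero_dotProduct, h1, h2] at key
    have : 0 < (S 0 0 * x 0) ^ 2 := by positivity
    nlinarith
  · have := hB.dotProduct_mulVec_pos htail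
    rw [star_trivial] at this
    nlinarith [sq_nonneg (S 0 0 * x 0 + S 0 1 * x 1 + S 0 2 * x 2)]

theorem IsSymm.three_mul_sq_le_four_mul_scaledSchur_of_min {G : Matrix (Fin 3) (Fin 3) ℤ}
    (hG : G.IsSymm) (hm : 0 < G 0 0) (hmin : ∀ w ≠ 0, G 0 0 ≤ w ⬝ᵥ G *ᵥ w) {w : Fin 2 → ℤ}
    (hw : w ≠ 0) : 3 * G 0 0 ^ 2 ≤ 4 * (w ⬝ᵥ G.scaledSchur *ᵥ w) := by
  obtain ⟨t, ht⟩ := Int.exists_four_mul_sq_le (G 0 0) (G 0 1 * w 0 + G 0 2 * w 1) hm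
  have hle := hmin (vecCons t w) fun h => hw (by simpa using congrArg vecTail h)
  have key := hG.mul_dotProduct_mulVec_eq_sq_add (vecCons t w)
  rw [tail_cons] at key
  simp only [cons_val_zero, cons_val_one, cons_val_two, vecHead, vecTail, Function.comp_apply,
    Fin.succ_zero_eq_one] at key
  nlinarith [mul_le_mul_of_nonneg_left hle hm.le]

theorem PosDef.exists_sq_add_sq_add_sq_of_min {G : Matrix (Fin 3) (Fin 3) ℤ} (hG : G.PosDef)
    (hdet : G.det = 1) (hmin : ∀ w ≠ 0, G 0 0 ≤ w ⬝ᵥ G *ᵥ w) (x : Fin 3 → ℤ) :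
    ∃ a b c : ℤ, x ⬝ᵥ G *ᵥ x = a ^ 2 + b ^ 2 + c ^ 2 := by
  have hm : 0 < G 0 0 := hG.diag_pos
  have hB := fun w (hw : w ≠ 0) => hG.isSymm.three_mul_sq_le_four_mul_scaledSchur_of_min hm hmin hw
  have hBpos : G.scaledSchur.PosDef :=
    PosDef.of_dotProduct_mulVec_pos (by simpa using G.isSymm_scaledSchur) fun w hw => by
      rw [star_trivial]
      nlinarith [hB w hw]
  have hBdet : G.scaledSchur.det = G 0 0 := by rw [hG.isSymm.det_scaledSchur, hdet, mul_one]
  obtain ⟨w, hw, hHermite⟩ := hBpos.exists_three_mul_sq_le_four_mul_det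
  have hBw := hB w hw
  rw [hBdet] at hHermite
  have hx := hG.isSymm.mul_dotProduct_mulVec_eq_sq_add x
  set m := G 0 0
  set q := w ⬝ᵥ G.scaledSchur *ᵥ w
  -- `3 m ^ 2 ≤ 4 q` and `3 q ^ 2 ≤ 4 m` force `27 m ^ 3 ≤ 64`
  have hm1 : m = 1 := by
    by_contra hne
    have h2 : 2 ≤ m := by omega
    have h8 : 8 * m ≤ m ^ 4 := by nlinarith [pow_le_pow_left₀ (by norm_num) h2 3]
    nlinarith [mul_le_mul hBw hBw (by positivity) (by nlinarith)]
  obtain ⟨a, b, hab⟩ := hBpos.exists_sq_add_sq_of_det_eq_one (hBdet.trans hm1) (vecTail x)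
  refine ⟨x 0 + G 0 1 * x 1 + G 0 2 * x 2, a, b, ?_⟩
  rw [hm1, one_mul, one_mul, hab] at hx
  rw [hx]
  ring

theorem PosDef.exists_sq_add_sq_add_sq_of_det_eq_one {S : Matrix (Fin 3) (Fin 3) ℤ}
    (hS : S.PosDef) (hdet : S.det = 1) (x : Fin 3 → ℤ) :
    ∃ a b c : ℤ, x ⬝ᵥ S *ᵥ x = a ^ 2 + b ^ 2 + c ^ 2 := by
  obtain ⟨U, hU, hG, hmin⟩ :=
    hS.exists_transpose_mul_mul_min 0 fun _ => exists_det_eq_one_col_zero_eq_fin_three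
  obtain ⟨w, hw⟩ := exists_dotProduct_transpose_mul_mul_mulVec_eq S hU x
  rw [← hw]
  exact hG.exists_sq_add_sq_add_sq_of_min (by simp [hU, hdet]) hmin w

end Matrix

open scoped NumberTheorySymbols

theorem exists_sum_three_sq_of_dvd_sq_add {N a b k : ℤ} (hN : 0 < N) (ha : 0 < a)
    (hk : N * k = a + 1) (hb : a ∣ b ^ 2 + k) : ∃ x y z : ℤ, x ^ 2 + y ^ 2 + z ^ 2 = N := by
  obtain ⟨c, hc⟩ := hb
  set S : Matrix (Fin 3) (Fin 3) ℤ := !![N, 0, 1; 0, a, b; 1, b, c]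
  have hdet : S.det = 1 := by
    rw [det_fin_three]
    simp only [S, of_apply, cons_val', cons_val, cons_val_zero, cons_val_one, cons_val_fin_one]
    linear_combination -N * hc + hk
  have hS : S.PosDef :=
    IsSymm.posDef_of_fin_three (by ext i j; fin_cases i <;> fin_cases j <;> rfl) (by simpa [S])
      (by simpa [S] using mul_pos hN ha) (by rw [hdet]; exact one_pos)
  obtain ⟨x, y, z, h⟩ := hS.exists_sq_add_sq_add_sq_of_det_eq_one hdet ![1, 0, 0]
  exact ⟨x, y, z, by simpa [S, dotProduct, mulVec, Fin.sum_univ_three] using h.symm⟩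

theorem exists_sq_add_dvd_of_jacobiSym_neg_eq_one {p : ℕ} [Fact p.Prime] {N k : ℤ}
    (hN : J(-N | p) = 1) (hk : (p : ℤ) ∣ N * k - 1) : ∃ b : ℤ, (p : ℤ) ∣ b ^ 2 + k := by
  obtain ⟨r, hr⟩ := ZMod.isSquare_of_jacobiSym_eq_one hN
  have ht : (p : ℤ) ∣ (r.val : ℤ) ^ 2 + N := by
    rw [← ZMod.intCast_zmod_eq_zero_iff_dvd]
    push_cast
    rw [ZMod.natCast_zmod_val, sq, ← hr]
    push_cast; ring
  refine ⟨r.val * k, ?_⟩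
  have : ((r.val : ℤ) * k) ^ 2 + k = k ^ 2 * ((r.val : ℤ) ^ 2 + N) - k * (N * k - 1) := by ring
  rw [this]
  exact dvd_sub (dvd_mul_of_dvd_right ht _) (dvd_mul_of_dvd_right hk _)

theorem exists_sum_three_sq_of_dvd_prime_add_one {N p : ℕ} (hN : 0 < N) (hp : p.Prime)
    (hJ : J(-N | p) = 1) (hdvd : (N : ℤ) ∣ p + 1) : ∃ x y z : ℤ, x ^ 2 + y ^ 2 + z ^ 2 = N := by
  have := Fact.mk hp
  obtain ⟨k, hk⟩ := hdvd
  obtain ⟨b, hb⟩ := exists_sq_add_dvd_of_jacobiSym_neg_eq_one hJ (k := k) ⟨1, by linarith⟩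
  exact exists_sum_three_sq_of_dvd_sq_add (by exact_mod_cast hN) (by exact_mod_cast hp.pos)
    hk.symm hb

theorem exists_sum_three_sq_of_dvd_two_mul_prime_add_one {N p : ℕ} (hN : 0 < N) (hp : p.Prime)
    (hp2 : Odd p) (hJ : J(-N | p) = 1) (hdvd : (N : ℤ) ∣ 2 * p + 1) :
    ∃ x y z : ℤ, x ^ 2 + y ^ 2 + z ^ 2 = N := by
  have := Fact.mk hp
  obtain ⟨k, hk⟩ := hdvd
  obtain ⟨b, hb⟩ := exists_sq_add_dvd_of_jacobiSym_neg_eq_one hJ (k := k) ⟨2, by linarith⟩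
  obtain ⟨j, hj⟩ := hp2
  obtain ⟨e, he⟩ := Int.even_mul_succ_self k
  -- shifting `b` by a multiple of the odd prime `p` makes `b ^ 2 + k` even as well
  set b' := b + p * (b + k)
  have h2 : (2 : ℤ) ∣ b' ^ 2 + k := by
    set M := b + j * (b + k)
    refine ⟨e + 2 * M * k + 2 * M ^ 2, ?_⟩
    have hb' : b' = k + 2 * M := by simp only [b', M, hj]; push_cast; ring
    rw [hb']
    linear_combination he
  have hp' : (p : ℤ) ∣ b' ^ 2 + k := by
    have : b' ^ 2 + k = (b ^ 2 + k) + p * ((b + k) * (2 * b + p * (b + k))) := by ring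
    rw [this]
    exact dvd_add hb (dvd_mul_right _ _)
  have hcop : IsCoprime (2 : ℤ) p := ⟨-j, 1, by rw [hj]; push_cast; ring⟩
  exact exists_sum_three_sq_of_dvd_sq_add (by exact_mod_cast hN)
    (mul_pos two_pos (by exact_mod_cast hp.pos)) (hk.symm.trans (by ring)) (hcop.mul_dvd h2 hp')

theorem jacobiSym_neg_eq_of_mod_four_eq_one {N p : ℕ} (hN : Odd N) (hp : p % 4 = 1) :
    J(-N | p) = J(p | N) := by
  rw [neg_eq_neg_one_mul, jacobiSym.mul_left, jacobiSym.at_neg_one (Nat.odd_iff.mpr (by omega)),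
    ZMod.χ₄_nat_one_mod_four hp, one_mul, jacobiSym.quadratic_reciprocity_one_mod_four' hN hp]

theorem exists_sum_three_sq_of_mod_four_eq_one {N : ℕ} (hN : N % 4 = 1) :
    ∃ x y z : ℤ, x ^ 2 + y ^ 2 + z ^ 2 = N := by
  obtain ⟨p, -, hp, hpr⟩ := Nat.forall_exists_prime_gt_and_zmodEq 0 (q := 4 * N)
    (a := 2 * N - 1) (by omega) ⟨-(2 * N + 1), N, by push_cast; ring⟩
  push_cast at hpr
  have hp4 : p % 4 = 1 := by
    have := hpr.of_mul_right N
    unfold Int.ModEq at this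
    omega
  have hpN : (p : ℤ) ≡ -1 [ZMOD N] :=
    (hpr.of_mul_left 4).trans (Int.modEq_iff_dvd.mpr ⟨-2, by ring⟩)
  refine exists_sum_three_sq_of_dvd_prime_add_one (by omega) hp ?_ (by simpa using hpN.symm.dvd)
  rw [jacobiSym_neg_eq_of_mod_four_eq_one (Nat.odd_iff.mpr (by omega)) hp4, jacobiSym.mod_left' hpN,
    jacobiSym.at_neg_one (Nat.odd_iff.mpr (by omega)), ZMod.χ₄_nat_one_mod_four hN]

theorem exists_sum_three_sq_of_mod_eight_eq_three {N : ℕ} (hN : N % 8 = 3) :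
    ∃ x y z : ℤ, x ^ 2 + y ^ 2 + z ^ 2 = N := by
  obtain ⟨j, rfl⟩ : ∃ j, N = 8 * j + 3 := ⟨N / 8, by omega⟩
  obtain ⟨p, -, hp, hpr⟩ := Nat.forall_exists_prime_gt_and_zmodEq 0 (q := 4 * (8 * j + 3))
    (a := 4 * j + 1) (by omega) ⟨8 * j + 1, -j, by push_cast; ring⟩
  push_cast at hpr
  have hp4 : p % 4 = 1 := by
    have := hpr.of_mul_right (8 * j + 3)
    unfold Int.ModEq at this
    omega
  have hpN := hpr.of_mul_left 4
  have hNodd : Odd (8 * j + 3) := ⟨4 * j + 1, by ring⟩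
  refine exists_sum_three_sq_of_dvd_two_mul_prime_add_one (by omega) hp
    (Nat.odd_iff.mpr (by omega)) ?_ ?_
  · -- `2 (4 j + 1) ≡ -1 (mod N)` pins down `J(4 j + 1 | N)`
    have h2 : J(2 | 8 * j + 3) * J(4 * j + 1 | 8 * j + 3) = J(-1 | 8 * j + 3) := by
      rw [← jacobiSym.mul_left]
      exact jacobiSym.mod_left' (Int.modEq_iff_dvd.mpr ⟨-1, by push_cast; ring⟩)
    rw [jacobiSym.at_two hNodd, jacobiSym.at_neg_one hNodd, ZMod.χ₈_nat_mod_eight,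
      ZMod.χ₄_nat_three_mod_four (by omega), show (8 * j + 3) % 8 = 3 by omega] at h2
    rw [jacobiSym_neg_eq_of_mod_four_eq_one hNodd hp4, jacobiSym.mod_left' hpN]
    push_cast at h2 ⊢
    have : ZMod.χ₈ 3 = -1 := rfl
    rw [this] at h2
    linarith
  · have h : (2 * p + 1 : ℤ) = 2 * (p - (4 * j + 1)) + (8 * j + 3) := by ring
    push_cast
    rw [h]
    exact dvd_add (dvd_mul_of_dvd_right hpN.symm.dvd 2) dvd_rfl

theorem exists_sum_three_sq_of_mod_four_eq_two {N : ℕ} (hN : N % 4 = 2) :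
    ∃ x y z : ℤ, x ^ 2 + y ^ 2 + z ^ 2 = N := by
  obtain ⟨j, rfl⟩ : ∃ j, N = 4 * j + 2 := ⟨N / 4, by omega⟩
  obtain ⟨p, -, hp, hpr⟩ := Nat.forall_exists_prime_gt_and_zmodEq 0 (q := 8 * (2 * j + 1))
    (a := 4 * j + 1) (by omega) ⟨4 * j + 1, -j, by push_cast; ring⟩
  push_cast at hpr
  have hp8 : p % 8 = (4 * j + 1) % 8 := by
    have := hpr.of_mul_right (2 * j + 1)
    unfold Int.ModEq at this
    omega
  have hpM : (p : ℤ) ≡ -1 [ZMOD (2 * j + 1 : ℕ)] := by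
    push_cast
    exact (hpr.of_mul_left 8).trans (Int.modEq_iff_dvd.mpr ⟨-2, by ring⟩)
  have hModd : Odd (2 * j + 1) := odd_two_mul_add_one j
  refine exists_sum_three_sq_of_dvd_prime_add_one (by omega) hp ?_ ?_
  · rw [show (-((4 * j + 2 : ℕ) : ℤ)) = -2 * (2 * j + 1 : ℕ) by push_cast; ring, jacobiSym.mul_left,
      jacobiSym.at_neg_two (Nat.odd_iff.mpr (by omega)),
      jacobiSym.quadratic_reciprocity_one_mod_four' hModd (by omega), jacobiSym.mod_left' hpM,
      jacobiSym.at_neg_one hModd, ZMod.χ₈'_nat_eq_if_mod_eight, ZMod.χ₄_nat_eq_if_mod_four]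
    split_ifs <;> omega
  · have hpN : (p : ℤ) ≡ -1 [ZMOD (4 * j + 2 : ℕ)] := by
      push_cast
      have h : (p : ℤ) ≡ 4 * j + 1 [ZMOD (4 * j + 2) * 4] := by
        rwa [show (4 * j + 2) * 4 = (8 * (2 * j + 1) : ℤ) by ring]
      exact (h.of_mul_right 4).trans (Int.modEq_iff_dvd.mpr ⟨-1, by ring⟩)
    simpa using hpN.symm.dvd

theorem exists_sum_three_sq_of_mod_eight {m : ℕ} (h4 : m % 4 ≠ 0) (h7 : m % 8 ≠ 7) :
    ∃ x y z : ℤ, x ^ 2 + y ^ 2 + z ^ 2 = m := by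
  rcases (by omega : m % 4 = 1 ∨ m % 8 = 3 ∨ m % 4 = 2) with h | h | h
  exacts [exists_sum_three_sq_of_mod_four_eq_one h, exists_sum_three_sq_of_mod_eight_eq_three h,
    exists_sum_three_sq_of_mod_four_eq_two h]

theorem exists_sum_three_sq_four_pow_mul (a : ℕ) {m : ℕ} (h4 : m % 4 ≠ 0) (h7 : m % 8 ≠ 7) :
    ∃ x y z : ℤ, x ^ 2 + y ^ 2 + z ^ 2 = (4 ^ a * m : ℕ) := by
  induction a with
  | zero => simpa using exists_sum_three_sq_of_mod_eight h4 h7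
  | succ a ih =>
    obtain ⟨x, y, z, h⟩ := ih
    exact ⟨2 * x, 2 * y, 2 * z, by push_cast at h ⊢; rw [pow_succ]; linear_combination 4 * h⟩

theorem exists_sq_add_sum_three_sq_of_even {n : ℕ} (hn : Even n) (h64 : ¬64 ∣ n) :
    ∃ t x y z : ℤ, (t = 0 ∨ t = 4) ∧ t ^ 2 + x ^ 2 + y ^ 2 + z ^ 2 = n := by
  have rep : ∀ t : ℤ, t = 0 ∨ t = 4 → ∀ a m : ℕ, t ^ 2 + 4 ^ a * m = n → m % 4 ≠ 0 →
      m % 8 ≠ 7 → ∃ t x y z : ℤ, (t = 0 ∨ t = 4) ∧ t ^ 2 + x ^ 2 + y ^ 2 + z ^ 2 = n :=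
    fun t ht a m h h4 h7 => by
      obtain ⟨x, y, z, hxyz⟩ := exists_sum_three_sq_four_pow_mul a h4 h7
      refine ⟨t, x, y, z, ht, ?_⟩
      rw [← h, add_assoc, add_assoc, ← add_assoc (x ^ 2), hxyz]
      push_cast
      ring
  have h2 : n % 2 = 0 := Nat.even_iff.mp hn
  rcases (by omega : n % 4 = 2 ∨ n % 16 = 8 ∨ (n % 8 = 4 ∧ n / 4 % 8 ≠ 7) ∨
      (n % 8 = 4 ∧ n / 4 % 8 = 7) ∨ (n % 16 = 0 ∧ n / 16 % 8 ≠ 7) ∨ (n % 16 = 0 ∧ n / 16 % 8 = 7))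
    with h | h | h | h | h | h
  · exact rep 0 (.inl rfl) 0 n (by norm_num) (by omega) (by omega)
  · exact rep 0 (.inl rfl) 1 (n / 4) (by norm_num; omega) (by omega) (by omega)
  · exact rep 0 (.inl rfl) 1 (n / 4) (by norm_num; omega) (by omega) (by omega)
  · exact rep 4 (.inr rfl) 1 (n / 4 - 4) (by norm_num; omega) (by omega) (by omega)
  · exact rep 0 (.inl rfl) 2 (n / 16) (by norm_num; omega) (by omega) (by omega)
  · exact rep 4 (.inr rfl) 2 (n / 16 - 1) (by norm_num; omega) (by omega) (by omega)

theorem exists_four_mul_sum_four_sq_eq {s x y z : ℤ} (h4 : 4 ∣ s + x + y + z) (hxy : 2 ∣ x + y)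
    (hxz : 2 ∣ x + z) :
    ∃ a b c d : ℤ, 4 * (a ^ 2 + b ^ 2 + c ^ 2 + d ^ 2) = s ^ 2 + x ^ 2 + y ^ 2 + z ^ 2 ∧
      a + b + c + d = s := by
  obtain ⟨a, ha⟩ := h4
  obtain ⟨u, hu⟩ := hxy
  obtain ⟨v, hv⟩ := hxz
  obtain rfl : s = 4 * a - x - y - z := by linarith
  obtain rfl : y = 2 * u - x := by linarith
  obtain rfl : z = 2 * v - x := by linarith
  exact ⟨a, a - u - v + x, a - v, a - u, by ring, by ring⟩

theorem exists_sum_four_sq_and_add_eq_one {n x y z : ℤ} (h : x ^ 2 + y ^ 2 + z ^ 2 = 4 * n - 1) :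
    ∃ a b c d : ℤ, a ^ 2 + b ^ 2 + c ^ 2 + d ^ 2 = n ∧ a + b + c + d = 1 := by
  have hx := Int.sq_emod_four_eq_emod_two x
  have hy := Int.sq_emod_four_eq_emod_two y
  have hz := Int.sq_emod_four_eq_emod_two z
  obtain ⟨x', hx', hx'2, h4⟩ : ∃ x', x' ^ 2 = x ^ 2 ∧ x' % 2 = 1 ∧ 4 ∣ 1 + x' + y + z := by
    by_cases h4 : 4 ∣ 1 + x + y + z
    · exact ⟨x, rfl, by omega, h4⟩
    · exact ⟨-x, by ring, by omega, by omega⟩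
  obtain ⟨a, b, c, d, habcd, hsum⟩ := exists_four_mul_sum_four_sq_eq h4 (by omega) (by omega)
  exact ⟨a, b, c, d, by linarith, hsum⟩

theorem exists_sum_four_sq_and_add_eq_two_mul {n t x y z : ℤ}
    (h : t ^ 2 + x ^ 2 + y ^ 2 + z ^ 2 = n) (hn : Even n) :
    ∃ a b c d : ℤ, a ^ 2 + b ^ 2 + c ^ 2 + d ^ 2 = n ∧ a + b + c + d = 2 * t := by
  rw [← h] at hn
  obtain ⟨k, hk⟩ : Even (t + x + y + z) := by simpa [parity_simps] using hn
  obtain ⟨a, b, c, d, habcd, hsum⟩ := exists_four_mul_sum_four_sq_eq (s := 2 * t) (x := 2 * x)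
    (y := 2 * y) (z := 2 * z) ⟨k, by linarith⟩ ⟨x + y, by ring⟩ ⟨x + z, by ring⟩
  exact ⟨a, b, c, d, by linarith, hsum⟩

theorem sum_is_cube (n : ℕ) :
    ∃ a b c d : ℤ, a^2 + b^2 + c^2 + d^2 = (n : ℤ) ∧ ∃ m : ℤ, 0 ≤ m ∧ a + b + c + d = m^3 := by
  induction n using Nat.strong_induction_on with
  | _ n ih =>
  by_cases h64 : 64 ∣ n
  · obtain rfl | hn := eq_or_ne n 0
    · exact ⟨0, 0, 0, 0, by norm_num, 0, le_rfl, by norm_num⟩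
    obtain ⟨k, rfl⟩ := h64
    obtain ⟨a, b, c, d, hsq, m, hm, hsum⟩ := ih k (by omega)
    exact ⟨8 * a, 8 * b, 8 * c, 8 * d, by push_cast; linear_combination 64 * hsq, 2 * m,
      by positivity, by linear_combination 8 * hsum⟩
  rcases Nat.even_or_odd n with hev | hodd
  · obtain ⟨t, x, y, z, ht, h⟩ := exists_sq_add_sum_three_sq_of_even hev h64
    obtain ⟨a, b, c, d, hsq, hsum⟩ :=
      exists_sum_four_sq_and_add_eq_two_mul h ((Int.even_coe_nat n).mpr hev)
    rcases ht with rfl | rfl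
    · exact ⟨a, b, c, d, hsq, 0, le_rfl, by rw [hsum]; norm_num⟩
    · exact ⟨a, b, c, d, hsq, 2, zero_le_two, by rw [hsum]; norm_num⟩
  · have h1 := Nat.odd_iff.mp hodd
    obtain ⟨x, y, z, h⟩ := exists_sum_three_sq_of_mod_eight (m := 4 * n - 1) (by omega) (by omega)
    obtain ⟨a, b, c, d, hsq, hsum⟩ := exists_sum_four_sq_and_add_eq_one (n := n) (by rw [h]; omega)
    exact ⟨a, b, c, d, hsq, 1, zero_le_one, by rw [hsum]; norm_num⟩
end

section
/- Let n be a nonnegative integer and T an integer with T ≡ n (mod 2). Then T ∈ S(n) if and only if 4n − T² is a sum of three integer squares, where S(n) = {a+b+c+d : a,b,c,d ∈ ℤ, a²+b²+c²+d² = n}. -/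
/-!
The Hadamard transform `(a, b, c, d) ↦ (a+b+c+d, a+b-c-d, a-b+c-d, a-b-c+d)` multiplies the sum
of squares by 4, which gives one direction with `T = a+b+c+d`. Conversely, given
`T² + A² + B² + C² = 4n`, inverting the transform requires the four combinations
`T ± A ± B ± C` to be divisible by 4; the parity hypothesis gives `T² + A² + B² + C² ≡ 4T (mod 8)`,
and a finite check modulo 8 shows that the signs of `A`, `B`, `C` can then be chosen to make this so.
-/

theorem sum_sq_hadamard {R : Type*} [CommRing R] (a b c d : R) :
    (a + b + c + d) ^ 2 + (a + b - c - d) ^ 2 + (a - b + c - d) ^ 2 + (a - b - c + d) ^ 2 =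
      4 * (a ^ 2 + b ^ 2 + c ^ 2 + d ^ 2) := by
  ring

-- In `ZMod 8`, `2 * x = 0` says that `x ≡ 0 (mod 4)`.
theorem ZMod.exists_signs_hadamard_four_dvd :
    ∀ t a b c : ZMod 8, t ^ 2 + a ^ 2 + b ^ 2 + c ^ 2 = 4 * t →
      ∃ ε ∈ ({1, -1} : Finset ℤ), ∃ δ ∈ ({1, -1} : Finset ℤ), ∃ η ∈ ({1, -1} : Finset ℤ),
        2 * (t + ε * a + δ * b + η * c) = 0 ∧ 2 * (t + ε * a - δ * b - η * c) = 0 ∧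
        2 * (t - ε * a + δ * b - η * c) = 0 ∧ 2 * (t - ε * a - δ * b + η * c) = 0 := by
  decide

theorem Int.four_dvd_of_two_mul_zmod_eight_eq_zero {x : ℤ} (h : 2 * (x : ZMod 8) = 0) :
    4 ∣ x := by
  have h8 : (8 : ℤ) ∣ 2 * x := (ZMod.intCast_zmod_eq_zero_iff_dvd _ 8).mp (by push_cast; exact h)
  omega

theorem Int.exists_signs_hadamard_four_dvd {T A B C : ℤ}
    (h : T ^ 2 + A ^ 2 + B ^ 2 + C ^ 2 ≡ 4 * T [ZMOD 8]) :
    ∃ ε δ η : ℤ, ε ^ 2 = 1 ∧ δ ^ 2 = 1 ∧ η ^ 2 = 1 ∧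
      4 ∣ T + ε * A + δ * B + η * C ∧ 4 ∣ T + ε * A - δ * B - η * C ∧
      4 ∣ T - ε * A + δ * B - η * C ∧ 4 ∣ T - ε * A - δ * B + η * C := by
  have hmod : (T : ZMod 8) ^ 2 + (A : ZMod 8) ^ 2 + (B : ZMod 8) ^ 2 + (C : ZMod 8) ^ 2 =
      4 * (T : ZMod 8) := by exact_mod_cast (ZMod.intCast_eq_intCast_iff _ _ 8).mpr h
  obtain ⟨ε, hε, δ, hδ, η, hη, h₁, h₂, h₃, h₄⟩ :=
    ZMod.exists_signs_hadamard_four_dvd T A B C hmod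
  have sq_eq_one {s : ℤ} (hs : s ∈ ({1, -1} : Finset ℤ)) : s ^ 2 = 1 := by
    simp only [Finset.mem_insert, Finset.mem_singleton] at hs
    rcases hs with rfl | rfl <;> norm_num
  refine ⟨ε, δ, η, sq_eq_one hε, sq_eq_one hδ, sq_eq_one hη, ?_, ?_, ?_, ?_⟩ <;>
    apply Int.four_dvd_of_two_mul_zmod_eight_eq_zero <;> push_cast <;> assumption

theorem Int.exists_sum_four_sq_eq_of_sum_four_sq_eq_four_mul {n T A B C : ℤ}
    (hpar : T ≡ n [ZMOD 2]) (h : T ^ 2 + A ^ 2 + B ^ 2 + C ^ 2 = 4 * n) :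
    ∃ a b c d : ℤ, a ^ 2 + b ^ 2 + c ^ 2 + d ^ 2 = n ∧ a + b + c + d = T := by
  have h8 : T ^ 2 + A ^ 2 + B ^ 2 + C ^ 2 ≡ 4 * T [ZMOD 8] := by
    rw [h]
    exact (Int.ModEq.mul_left' hpar.symm).trans (by norm_num)
  obtain ⟨ε, δ, η, hε, hδ, hη, ⟨a, ha⟩, ⟨b, hb⟩, ⟨c, hc⟩, ⟨d, hd⟩⟩ :=
    Int.exists_signs_hadamard_four_dvd h8
  refine ⟨a, b, c, d, ?_, by linarith⟩
  have hsq : (4 * a) ^ 2 + (4 * b) ^ 2 + (4 * c) ^ 2 + (4 * d) ^ 2 = 4 * (4 * n) := by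
    rw [← ha, ← hb, ← hc, ← hd, ← h]
    linear_combination sum_sq_hadamard T (ε * A) (δ * B) (η * C) +
      4 * A ^ 2 * hε + 4 * B ^ 2 * hδ + 4 * C ^ 2 * hη
  linarith

theorem main_theorem_general (n T : ℤ) (hpar : T ≡ n [ZMOD 2]) :
    (∃ a b c d : ℤ, a^2 + b^2 + c^2 + d^2 = n ∧ a + b + c + d = T) ↔
      ∃ A B C : ℤ, A^2 + B^2 + C^2 = 4 * n - T^2 := by
  constructor
  · rintro ⟨a, b, c, d, rfl, rfl⟩
    exact ⟨a + b - c - d, a - b + c - d, a - b - c + d,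
      by linear_combination sum_sq_hadamard a b c d⟩
  · rintro ⟨A, B, C, h⟩
    exact Int.exists_sum_four_sq_eq_of_sum_four_sq_eq_four_mul (A := A) (B := B) (C := C) hpar
      (by linear_combination h)

theorem main_theorem (n T : ℤ) (hn : 0 ≤ n) (hpar : T ≡ n [ZMOD 2]) :
    (∃ a b c d : ℤ, a^2 + b^2 + c^2 + d^2 = n ∧ a + b + c + d = T) ↔
      ∃ A B C : ℤ, A^2 + B^2 + C^2 = 4 * n - T^2 :=
  main_theorem_general n T hpar
end

section
/- If 8 divides n, then S(n) = 2·S(n/4), i.e., T ∈ S(n) if and only if T is even and T/2 ∈ S(n/4), where S(m) = {a+b+c+d : a,b,c,d ∈ ℤ, a²+b²+c²+d² = m}. -/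
/-!
Odd squares are `1 mod 8` and even squares are `0` or `4 mod 8`, so a sum of four squares
divisible by `8` has all four roots even. Halving them maps representations of `n` onto
representations of `n / 4`, halving the sum of the roots; doubling is the inverse map.
-/

lemma Int.two_dvd_of_eight_dvd_sq_add_sq_add_sq_add_sq {a b c d : ℤ}
    (h : 8 ∣ a ^ 2 + b ^ 2 + c ^ 2 + d ^ 2) : 2 ∣ a ∧ 2 ∣ b ∧ 2 ∣ c ∧ 2 ∣ d := by
  -- in `ZMod 8`, `4 * x = 0` says exactly that `x` is even
  have key : ∀ x y z w : ZMod 8, x ^ 2 + y ^ 2 + z ^ 2 + w ^ 2 = 0 →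
      4 * x = 0 ∧ 4 * y = 0 ∧ 4 * z = 0 ∧ 4 * w = 0 := by decide
  have h8 : ((a ^ 2 + b ^ 2 + c ^ 2 + d ^ 2 : ℤ) : ZMod 8) = 0 :=
    (ZMod.intCast_zmod_eq_zero_iff_dvd _ 8).2 h
  push_cast at h8
  have even_of_four_mul {x : ℤ} (hx : 4 * (x : ZMod 8) = 0) : 2 ∣ x := by
    have : (8 : ℤ) ∣ 4 * x := (ZMod.intCast_zmod_eq_zero_iff_dvd _ 8).1 (by push_cast; exact hx)
    omega
  obtain ⟨ha, hb, hc, hd⟩ := key a b c d h8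
  exact ⟨even_of_four_mul ha, even_of_four_mul hb, even_of_four_mul hc, even_of_four_mul hd⟩

theorem spectrum_dilation_general (n : ℤ) (h8 : (8 : ℤ) ∣ n) (T : ℤ) :
    (∃ a b c d : ℤ, a^2 + b^2 + c^2 + d^2 = n ∧ a + b + c + d = T) ↔
      (Even T ∧ ∃ a b c d : ℤ, a^2 + b^2 + c^2 + d^2 = n / 4 ∧ a + b + c + d = T / 2) := by
  have double (a b c d : ℤ) :
      (2 * a) ^ 2 + (2 * b) ^ 2 + (2 * c) ^ 2 + (2 * d) ^ 2 = 4 * (a^2 + b^2 + c^2 + d^2) := by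
    ring
  constructor
  · rintro ⟨a, b, c, d, rfl, rfl⟩
    obtain ⟨⟨a, rfl⟩, ⟨b, rfl⟩, ⟨c, rfl⟩, ⟨d, rfl⟩⟩ :=
      Int.two_dvd_of_eight_dvd_sq_add_sq_add_sq_add_sq h8
    refine ⟨⟨a + b + c + d, by ring⟩, a, b, c, d, ?_, by omega⟩
    rw [double, Int.mul_ediv_cancel_left _ (by norm_num)]
  · rintro ⟨hT, a, b, c, d, hs, hsum⟩
    refine ⟨2 * a, 2 * b, 2 * c, 2 * d, ?_, ?_⟩
    · rw [double, hs, Int.mul_ediv_cancel' (dvd_trans (by norm_num) h8)]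
    · obtain ⟨t, rfl⟩ := hT
      omega

theorem spectrum_dilation (n : ℤ) (hn : 0 ≤ n) (h8 : (8 : ℤ) ∣ n) (T : ℤ) :
    (∃ a b c d : ℤ, a^2 + b^2 + c^2 + d^2 = n ∧ a + b + c + d = T) ↔
      (Even T ∧ ∃ a b c d : ℤ, a^2 + b^2 + c^2 + d^2 = n / 4 ∧ a + b + c + d = T / 2) :=
  spectrum_dilation_general n h8 T
end

section
/- Let T be twice an odd integer and n a positive integer with 4n ≥ T² and n even. Then T ∈ S(n) if and only if n ≢ 0 (mod 8), where S(n) = {a+b+c+d : a,b,c,d ∈ ℤ, a²+b²+c²+d² = n}. -/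
/-!
If `8 ∤ n`, then `m = n - t²` is odd with `m ≢ 7 (mod 8)`, so `m = x² + y² + z²` by the
three-square theorem, and the four numbers `(t ± x ± y ± z) / 2` with an even number of minus
signs are integers whose squares sum to `n` and which add up to `2t`. Conversely, if `8 ∣ n` then a
sum of four squares equal to `n` has `a + b + c + d ≡ 0 (mod 4)`, while `2t ≡ 2 (mod 4)`.

The three-square theorem for odd `m ≢ 7 (mod 8)` is proved classically. Dirichlet's theorem and
quadratic reciprocity give a prime `p` for which `-m` is a square mod `p`; from it one builds a
positive definite integral ternary form of determinant `1` with `m` as its first diagonal entry.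
Every such form is integrally equivalent to `x² + y² + z²`: while the first diagonal entry exceeds
`1` it can be lowered, by Hermite's bound `3a² ≤ 4 · det` for reduced binary forms applied to the
form of `2 × 2` minors, and once it is `1` the form splits off a binary form of determinant `1`.
-/

open Matrix

theorem Int.exists_two_mul_abs_sub_mul_le (a b : ℤ) (ha : 0 < a) :
    ∃ k : ℤ, 2 * |b - a * k| ≤ a := by
  refine ⟨round ((b : ℚ) / a), ?_⟩
  have ha' : (0 : ℚ) < a := by exact_mod_cast ha
  have key : ((b - a * round ((b : ℚ) / a) : ℤ) : ℚ) =
      a * ((b : ℚ) / a - round ((b : ℚ) / a)) := by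
    push_cast; field_simp
  have : (2 * |b - a * round ((b : ℚ) / a)| : ℚ) ≤ a := by
    have := congrArg abs key
    push_cast at this ⊢
    rw [this, abs_mul, abs_of_pos ha']
    nlinarith [abs_sub_round ((b : ℚ) / a)]
  exact_mod_cast this

namespace Matrix

theorem PosDef.symm_apply {n : Type*} {G : Matrix n n ℤ} (hG : G.PosDef) (i j : n) :
    G j i = G i j := by
  simpa using hG.isHermitian.apply i j

theorem posDef_fin_two {a b c : ℤ} (ha : 0 < a) (hdet : 0 < a * c - b ^ 2) :
    (!![a, b; b, c]).PosDef := by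
  refine PosDef.of_dotProduct_mulVec_pos ?_ fun x hx => ?_
  · ext i j; fin_cases i <;> fin_cases j <;> rfl
  have key : a * (star x ⬝ᵥ (!![a, b; b, c] *ᵥ x)) =
      (a * x 0 + b * x 1) ^ 2 + (a * c - b ^ 2) * x 1 ^ 2 := by
    simp [dotProduct, mulVec, Fin.sum_univ_two]; ring
  rcases eq_or_ne (x 1) 0 with h1 | h1
  · have h0 : x 0 ≠ 0 := fun h0 => hx (by ext i; fin_cases i <;> simp [h0, h1])
    have : 0 < (a * x 0) ^ 2 := by positivity
    rw [h1] at key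
    nlinarith
  · have : 0 < x 1 ^ 2 := by positivity
    nlinarith [sq_nonneg (a * x 0 + b * x 1), mul_pos hdet this]

variable {n : Type*} [Fintype n] [DecidableEq n]

def IntCongr (G H : Matrix n n ℤ) : Prop :=
  ∃ U : Matrix n n ℤ, IsUnit U.det ∧ Uᵀ * G * U = H

namespace IntCongr

variable {G H K : Matrix n n ℤ}

theorem trans (hGH : IntCongr G H) (hHK : IntCongr H K) : IntCongr G K := by
  obtain ⟨U, hU, rfl⟩ := hGH
  obtain ⟨V, hV, rfl⟩ := hHK
  exact ⟨U * V, by rw [det_mul]; exact hU.mul hV,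
    by simp only [transpose_mul, Matrix.mul_assoc]⟩

theorem symm (h : IntCongr G H) : IntCongr H G := by
  obtain ⟨U, hU, rfl⟩ := h
  refine ⟨U⁻¹, isUnit_nonsing_inv_det U hU, ?_⟩
  rw [transpose_nonsing_inv, Matrix.mul_assoc, Matrix.mul_assoc, mul_nonsing_inv U hU,
    Matrix.mul_one, ← Matrix.mul_assoc, nonsing_inv_mul _ (isUnit_det_transpose U hU),
    Matrix.one_mul]

theorem det_eq (h : IntCongr G H) : H.det = G.det := by
  obtain ⟨U, hU, rfl⟩ := h
  rw [det_mul, det_mul, det_transpose, mul_comm, ← mul_assoc, Int.isUnit_mul_self hU, one_mul]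

theorem posDef (h : IntCongr G H) (hG : G.PosDef) : H.PosDef := by
  obtain ⟨U, hU, rfl⟩ := h
  simpa [conjTranspose_eq_transpose_of_trivial] using
    hG.conjTranspose_mul_mul_same (mulVec_injective_of_isUnit ((isUnit_iff_isUnit_det U).mpr hU))

theorem exists_sum_sq_eq_diag (h : IntCongr G 1) (i : n) :
    ∃ v : n → ℤ, ∑ k, v k ^ 2 = G i i := by
  obtain ⟨U, -, hUG⟩ := h.symm
  refine ⟨fun k => U k i, ?_⟩
  rw [← hUG]
  simp [Matrix.mul_apply, sq]

theorem block_one_fin_three {M : Matrix (Fin 2) (Fin 2) ℤ} (hM : IntCongr M 1) :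
    IntCongr !![1, 0, 0; 0, M 0 0, M 0 1; 0, M 1 0, M 1 1] 1 := by
  obtain ⟨V, hV, hVM⟩ := hM
  refine ⟨!![1, 0, 0; 0, V 0 0, V 0 1; 0, V 1 0, V 1 1],
    by simpa [det_fin_three, det_fin_two] using hV, ?_⟩
  simp [← Matrix.ext_iff, Fin.forall_fin_two, mul_apply, Fin.sum_univ_two] at hVM
  obtain ⟨⟨e00, e01⟩, e10, e11⟩ := hVM
  ext i j
  fin_cases i <;> fin_cases j <;> simp [mul_apply, Fin.sum_univ_three]
  all_goals first
    | linear_combination e00 | linear_combination e01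
    | linear_combination e10 | linear_combination e11

end IntCongr

theorem intCongr_swap_fin_two (G : Matrix (Fin 2) (Fin 2) ℤ) :
    IntCongr G !![G 1 1, G 1 0; G 0 1, G 0 0] :=
  ⟨!![0, 1; 1, 0], by simp, by ext i j; fin_cases i <;> fin_cases j <;> simp [Matrix.mul_apply]⟩

theorem exists_intCongr_shear_fin_two (G : Matrix (Fin 2) (Fin 2) ℤ) (hG : G.PosDef) :
    ∃ H, IntCongr G H ∧ H 0 0 = G 0 0 ∧ 2 * |H 0 1| ≤ H 0 0 := by
  obtain ⟨k, hk⟩ := Int.exists_two_mul_abs_sub_mul_le (G 0 0) (G 0 1) hG.diag_pos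
  set H := !![1, -k; 0, 1]ᵀ * G * !![1, -k; 0, 1]
  have h00 : H 0 0 = G 0 0 := by simp [H, Matrix.mul_apply, Fin.sum_univ_two]
  have h01 : H 0 1 = G 0 1 - G 0 0 * k := by
    simp [H, Matrix.mul_apply, Fin.sum_univ_two]; ring
  exact ⟨H, ⟨_, by simp, rfl⟩, h00, by rwa [h00, h01]⟩

theorem exists_intCongr_reduced_fin_two (G : Matrix (Fin 2) (Fin 2) ℤ) (hG : G.PosDef) :
    ∃ H, IntCongr G H ∧ 2 * |H 0 1| ≤ H 0 0 ∧ H 0 0 ≤ H 1 1 := by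
  induction hN : (G 0 0).toNat using Nat.strong_induction_on generalizing G with
  | _ N ih =>
    obtain ⟨H, hGH, hH00, hH01⟩ := exists_intCongr_shear_fin_two G hG
    by_cases hle : H 0 0 ≤ H 1 1
    · exact ⟨H, hGH, hH01, hle⟩
    have hGH' := hGH.trans (intCongr_swap_fin_two H)
    have hpos : 0 < H 1 1 := (hGH.posDef hG).diag_pos
    obtain ⟨K, hK, hKred⟩ := ih (H 1 1).toNat (by omega) _ (hGH'.posDef hG) (by simp)
    exact ⟨K, hGH'.trans hK, hKred⟩

theorem three_mul_sq_le_det_of_reduced {H : Matrix (Fin 2) (Fin 2) ℤ} (hsymm : H 1 0 = H 0 1)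
    (h01 : 2 * |H 0 1| ≤ H 0 0) (h11 : H 0 0 ≤ H 1 1) : 3 * H 0 0 ^ 2 ≤ 4 * H.det := by
  rw [det_fin_two, hsymm]
  nlinarith [sq_abs (H 0 1), abs_nonneg (H 0 1)]

theorem exists_intCongr_three_mul_sq_le_det (G : Matrix (Fin 2) (Fin 2) ℤ) (hG : G.PosDef) :
    ∃ H, IntCongr G H ∧ 3 * H 0 0 ^ 2 ≤ 4 * G.det := by
  obtain ⟨H, hGH, h01, h11⟩ := exists_intCongr_reduced_fin_two G hG
  refine ⟨H, hGH, ?_⟩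
  rw [← hGH.det_eq]
  exact three_mul_sq_le_det_of_reduced ((hGH.posDef hG).symm_apply 0 1) h01 h11

theorem intCongr_one_of_det_eq_one_fin_two (G : Matrix (Fin 2) (Fin 2) ℤ) (hG : G.PosDef)
    (hdet : G.det = 1) : IntCongr G 1 := by
  obtain ⟨H, hGH, h01, h11⟩ := exists_intCongr_reduced_fin_two G hG
  have hsymm := (hGH.posDef hG).symm_apply 0 1
  have hbound := three_mul_sq_le_det_of_reduced hsymm h01 h11
  have hdetH : H.det = 1 := hGH.det_eq.trans hdet
  rw [hdetH] at hbound
  have h00 : H 0 0 = 1 := by nlinarith [(hGH.posDef hG).diag_pos (i := 0)]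
  have h01' : H 0 1 = 0 := by
    rw [h00] at h01; exact abs_eq_zero.mp (by linarith [abs_nonneg (H 0 1)])
  rw [det_fin_two, hsymm, h00, h01'] at hdetH
  convert hGH
  ext i j
  fin_cases i <;> fin_cases j <;> simp [h00, h01', hsymm]
  linarith

theorem intCongr_one_of_corner_eq_one (G : Matrix (Fin 3) (Fin 3) ℤ) (hG : G.PosDef)
    (hdet : G.det = 1) (h00 : G 0 0 = 1) : IntCongr G 1 := by
  set a := G 1 1 - G 0 1 ^ 2
  set b := G 1 2 - G 0 1 * G 0 2
  set c := G 2 2 - G 0 2 ^ 2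
  have hsplit : IntCongr G !![1, 0, 0; 0, a, b; 0, b, c] := by
    refine ⟨!![1, -G 0 1, -G 0 2; 0, 1, 0; 0, 0, 1], by simp [det_fin_three], ?_⟩
    ext i j
    fin_cases i <;> fin_cases j <;>
      simp [a, b, c, mul_apply, Fin.sum_univ_three, hG.symm_apply 0 1, hG.symm_apply 0 2,
        hG.symm_apply 1 2, h00] <;> ring
  have hdet' : a * c - b ^ 2 = 1 := by
    have := hsplit.det_eq
    rw [hdet] at this
    simpa [det_fin_three, sq] using this
  have ha : 0 < a := by simpa using (hsplit.posDef hG).diag_pos (i := 1)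
  have hM := intCongr_one_of_det_eq_one_fin_two _ (posDef_fin_two (b := b) (c := c) ha (by omega))
    (by rw [det_fin_two_of]; linear_combination hdet')
  exact hsplit.trans hM.block_one_fin_three

/- With `α, β, γ` the `2 × 2` minors through the corner, `G 0 0 · vᵀ G v` equals
`(G 0 0 v₀ + G 0 1 v₁ + G 0 2 v₂)² + (α v₁² + 2β v₁v₂ + γ v₂²)`, and the binary form `(α, β, γ)`
has determinant `G 0 0 · det G = G 0 0`. Hermite's bound makes its minimum small, and rounding
chooses `v₀`; then `vᵀ G v < G 0 0`, and `v` is the first column of a unimodular matrix. -/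
theorem exists_intCongr_corner_lt (G : Matrix (Fin 3) (Fin 3) ℤ) (hG : G.PosDef)
    (hdet : G.det = 1) (h2 : 2 ≤ G 0 0) : ∃ H, IntCongr G H ∧ H 0 0 < G 0 0 := by
  have h10 := hG.symm_apply 0 1
  have h20 := hG.symm_apply 0 2
  have h21 := hG.symm_apply 1 2
  set α := G 0 0 * G 1 1 - G 0 1 ^ 2
  set β := G 0 0 * G 1 2 - G 0 1 * G 0 2
  set γ := G 0 0 * G 2 2 - G 0 2 ^ 2
  have hα : 0 < α := by
    have := hG.dotProduct_mulVec_pos (x := ![-G 0 1, G 0 0, 0])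
      (fun h => by have := congrFun h 1; simp at this; omega)
    simp [dotProduct, mulVec, Fin.sum_univ_three, h10] at this
    nlinarith
  have hdetM : α * γ - β ^ 2 = G 0 0 := by
    rw [← mul_one (G 0 0), ← hdet, det_fin_three, h10, h20, h21]; ring
  have hM : (!![α, β; β, γ]).PosDef := posDef_fin_two hα (by omega)
  obtain ⟨N, hMN, hN⟩ := exists_intCongr_three_mul_sq_le_det _ hM
  have hNpos : 0 < N 0 0 := (hMN.posDef hM).diag_pos
  obtain ⟨V, hV, rfl⟩ := hMN
  rw [det_fin_two_of, ← sq, hdetM] at hN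
  obtain ⟨k, hk⟩ := Int.exists_two_mul_abs_sub_mul_le (G 0 0) (G 0 1 * V 0 0 + G 0 2 * V 1 0)
    (by omega)
  set U : Matrix (Fin 3) (Fin 3) ℤ := !![-k, 1, 0; V 0 0, 0, V 0 1; V 1 0, 0, V 1 1]
  have hU : IsUnit U.det := by
    have : U.det = -V.det := by simp [U, det_fin_three, det_fin_two]; ring
    rw [this]; exact hV.neg
  have key : G 0 0 * (Uᵀ * G * U) 0 0 =
      (G 0 1 * V 0 0 + G 0 2 * V 1 0 - G 0 0 * k) ^ 2 + (Vᵀ * !![α, β; β, γ] * V) 0 0 := by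
    simp [U, α, β, γ, mul_apply, Fin.sum_univ_three, Fin.sum_univ_two, h10, h20, h21]; ring
  refine ⟨_, ⟨U, hU, rfl⟩, ?_⟩
  set w := G 0 1 * V 0 0 + G 0 2 * V 1 0 - G 0 0 * k
  have hw : 4 * w ^ 2 ≤ G 0 0 ^ 2 := by nlinarith [abs_nonneg w, sq_abs w]
  nlinarith

theorem intCongr_one_of_det_eq_one_fin_three (G : Matrix (Fin 3) (Fin 3) ℤ) (hG : G.PosDef)
    (hdet : G.det = 1) : IntCongr G 1 := by
  induction hN : (G 0 0).toNat using Nat.strong_induction_on generalizing G with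
  | _ N ih =>
    have hpos : 0 < G 0 0 := hG.diag_pos
    by_cases h1 : G 0 0 = 1
    · exact intCongr_one_of_corner_eq_one G hG hdet h1
    obtain ⟨H, hGH, hlt⟩ := exists_intCongr_corner_lt G hG hdet (by omega)
    have hHpos : 0 < H 0 0 := (hGH.posDef hG).diag_pos
    exact hGH.trans (ih _ (by omega) H (hGH.posDef hG) (hGH.det_eq.trans hdet) rfl)

theorem exists_sum_three_sq_eq_corner (G : Matrix (Fin 3) (Fin 3) ℤ) (hG : G.PosDef)
    (hdet : G.det = 1) : ∃ x y z : ℤ, x ^ 2 + y ^ 2 + z ^ 2 = G 0 0 := by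
  obtain ⟨v, hv⟩ := (intCongr_one_of_det_eq_one_fin_three G hG hdet).exists_sum_sq_eq_diag 0
  exact ⟨v 0, v 1, v 2, by rw [← hv, Fin.sum_univ_three]⟩

end Matrix

theorem Int.exists_sum_three_sq_of_dvd {n D h f : ℤ} (hn : 0 < n) (hD : 0 < D)
    (hh : n ∣ h ^ 2 + D) (hf : D ∣ n * f ^ 2 + 1) : ∃ x y z : ℤ, x ^ 2 + y ^ 2 + z ^ 2 = n := by
  obtain ⟨b, hb⟩ := hh
  obtain ⟨c, hc⟩ := hf
  set G : Matrix (Fin 3) (Fin 3) ℤ := !![n, h, 0; h, b, f; 0, f, c]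
  have hdet : G.det = 1 := by
    simp [G, det_fin_three]; linear_combination -c * hb - hc
  have hpos : G.PosDef := by
    refine PosDef.of_dotProduct_mulVec_pos ?_ fun v hv => ?_
    · ext i j; fin_cases i <;> fin_cases j <;> rfl
    have key : D * n * (star v ⬝ᵥ (G *ᵥ v)) =
        D * (n * v 0 + h * v 1) ^ 2 + (D * v 1 + n * f * v 2) ^ 2 + n * v 2 ^ 2 := by
      simp [G, dotProduct, mulVec, Fin.sum_univ_three]
      linear_combination -(D * v 1 ^ 2) * hb - (n * v 2 ^ 2) * hc
    have hsum : 0 < D * (n * v 0 + h * v 1) ^ 2 + (D * v 1 + n * f * v 2) ^ 2 + n * v 2 ^ 2 := by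
      by_cases h2 : v 2 = 0
      · by_cases h1 : v 1 = 0
        · have h0 : v 0 ≠ 0 := fun h0 => hv (by ext i; fin_cases i <;> simp [h0, h1, h2])
          simp only [h1, h2, mul_zero, add_zero]
          positivity
        · simp only [h2, mul_zero, add_zero]
          positivity
      · positivity
    rw [← key] at hsum
    exact pos_of_mul_pos_right hsum (by positivity)
  simpa [G] using exists_sum_three_sq_eq_corner G hpos hdet

theorem Nat.exists_prime_gt_mod_eight_eq_one_and_cast_eq {n : ℕ} (hn : Odd n) {a : ZMod n}
    (ha : IsUnit a) (N : ℕ) : ∃ p, N < p ∧ p.Prime ∧ p % 8 = 1 ∧ (p : ZMod n) = a := by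
  have h8n : Nat.Coprime 8 n := Nat.Coprime.pow_left 3 (Nat.coprime_two_left.mpr hn)
  have : NeZero (8 * n) := ⟨by have := hn.pos; positivity⟩
  let e := ZMod.chineseRemainder h8n
  obtain ⟨p, hpN, hp, hpb⟩ := Nat.forall_exists_prime_gt_and_eq_mod
    (((Prod.isUnit_iff (x := ((1 : ZMod 8), a))).mpr ⟨isUnit_one, ha⟩).map e.symm) N
  have hep : e p = (1, a) := by rw [hpb, RingEquiv.apply_symm_apply]
  rw [map_natCast, Prod.ext_iff, Prod.fst_natCast, Prod.snd_natCast] at hep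
  refine ⟨p, hpN, hp, ?_, hep.2⟩
  simpa using (ZMod.natCast_eq_natCast_iff' p 1 8).mp (by simpa using hep.1)

theorem jacobiSym_neg_eq_of_cast_eq {n p : ℕ} (hn : Odd n) (hp : p % 4 = 1) {u : ℤ}
    (hpu : (p : ZMod n) = -u) : jacobiSym (-n) p = jacobiSym (-u) n := by
  have hpodd : Odd p := Nat.odd_iff.mpr (by omega)
  rw [neg_eq_neg_one_mul, jacobiSym.mul_left, jacobiSym.at_neg_one hpodd,
    ZMod.χ₄_nat_one_mod_four hp, one_mul,
    ← jacobiSym.quadratic_reciprocity_one_mod_four hp hn]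
  apply jacobiSym.mod_left'
  exact (ZMod.intCast_eq_intCast_iff' _ _ _).mp (by push_cast; exact hpu)

theorem Int.exists_dvd_mul_sq_add_one {n p : ℕ} (hp : p.Prime) (hnp : n < p) (hn : 0 < n)
    (hJ : jacobiSym (-n) p = 1) : ∃ f : ℤ, (p : ℤ) ∣ n * f ^ 2 + 1 := by
  have : Fact p.Prime := ⟨hp⟩
  have hn0 : (n : ZMod p) ≠ 0 := by
    rw [Ne, ZMod.natCast_eq_zero_iff]
    exact fun h => absurd (Nat.le_of_dvd hn h) (by omega)
  obtain ⟨r, hr⟩ : IsSquare ((-n : ℤ) : ZMod p) := by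
    rw [← legendreSym.eq_one_iff p (by simpa using hn0), jacobiSym.legendreSym.to_jacobiSym]
    exact hJ
  refine ⟨(r / n : ZMod p).val, ?_⟩
  rw [← ZMod.intCast_zmod_eq_zero_iff_dvd]
  push_cast at hr ⊢
  rw [ZMod.natCast_val, ZMod.cast_id]
  field_simp
  linear_combination -hr

theorem Int.exists_two_mul_dvd_mul_sq_add_one {n p f : ℤ} (hn : Odd n) (hp : Odd p)
    (hf : p ∣ n * f ^ 2 + 1) : ∃ g : ℤ, 2 * p ∣ n * g ^ 2 + 1 := by
  -- `f + p (f + 1)` is odd and congruent to `f` modulo `p`.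
  have hg : Odd (f + p * (f + 1)) := by
    rw [Int.odd_add, Int.even_mul, Int.even_add_one, ← Int.not_even_iff_odd]
    simp [Int.not_even_iff_odd.mpr hp]
  refine ⟨f + p * (f + 1), (Int.isCoprime_two_left.mpr hp).mul_dvd
    (hn.mul hg.pow).add_one.two_dvd ?_⟩
  have : n * (f + p * (f + 1)) ^ 2 + 1 =
      n * f ^ 2 + 1 + p * (n * (f + 1) * (2 * f + p * (f + 1))) := by
    ring
  rw [this]
  exact dvd_add hf (dvd_mul_right _ _)

/- For `n ≡ 1 (mod 4)` take a prime `p ≡ 1 (mod 8)` with `p ≡ -1 (mod n)` and `D = p`, `h = 1`;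
for `n ≡ 3 (mod 8)` take `p ≡ -2 (mod n)` and `D = 2p`, `h = 2`. In both cases reciprocity turns
`(-n / p)` into `(-1 / n)`, resp. `(-2 / n)`, which is `1`. -/
theorem Nat.exists_sum_three_sq_of_odd {n : ℕ} (hn : Odd n) (h7 : n % 8 ≠ 7) :
    ∃ x y z : ℤ, x ^ 2 + y ^ 2 + z ^ 2 = n := by
  have hn0 : 0 < n := hn.pos
  have hn' := Nat.odd_iff.mp hn
  rcases (by omega : n % 4 = 1 ∨ n % 8 = 3) with h4 | h8
  · obtain ⟨p, hnp, hp, hp8, hpn⟩ :=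
      exists_prime_gt_mod_eight_eq_one_and_cast_eq hn (a := -1) isUnit_one.neg n
    have hJ : jacobiSym (-n) p = 1 := by
      rw [jacobiSym_neg_eq_of_cast_eq hn (by omega) (u := 1) (by simpa using hpn),
        jacobiSym.at_neg_one hn, ZMod.χ₄_nat_one_mod_four h4]
    obtain ⟨f, hf⟩ := Int.exists_dvd_mul_sq_add_one hp hnp hn0 hJ
    refine Int.exists_sum_three_sq_of_dvd (h := 1) (by omega) (by exact_mod_cast hp.pos) ?_ hf
    rw [← ZMod.intCast_zmod_eq_zero_iff_dvd]
    push_cast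
    rw [hpn]; ring
  · have h2 : IsUnit (2 : ZMod n) := by
      simpa using (ZMod.isUnit_iff_coprime 2 n).mpr (Nat.coprime_two_left.mpr hn)
    obtain ⟨p, hnp, hp, hp8, hpn⟩ :=
      exists_prime_gt_mod_eight_eq_one_and_cast_eq hn (a := -2) h2.neg n
    have hJ : jacobiSym (-n) p = 1 := by
      rw [jacobiSym_neg_eq_of_cast_eq hn (by omega) (u := 2) (by simpa using hpn),
        jacobiSym.at_neg_two hn, ZMod.χ₈'_nat_eq_if_mod_eight]
      simp [h8, hn']
    obtain ⟨f, hf⟩ := Int.exists_dvd_mul_sq_add_one hp hnp hn0 hJ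
    obtain ⟨g, hg⟩ := Int.exists_two_mul_dvd_mul_sq_add_one ((Int.odd_coe_nat n).mpr hn)
      ((Int.odd_coe_nat p).mpr (hp.odd_of_ne_two (by omega))) hf
    refine Int.exists_sum_three_sq_of_dvd (h := 2) (by omega)
      (by have := hp.pos; positivity) ?_ hg
    rw [← ZMod.intCast_zmod_eq_zero_iff_dvd]
    push_cast
    rw [hpn]; ring

theorem Int.four_dvd_add_of_eight_dvd_sum_sq {a b c d : ℤ}
    (h : 8 ∣ a ^ 2 + b ^ 2 + c ^ 2 + d ^ 2) : 4 ∣ a + b + c + d := by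
  have key : ∀ a b c d : ZMod 8,
      a ^ 2 + b ^ 2 + c ^ 2 + d ^ 2 = 0 → 2 * (a + b + c + d) = 0 := by
    decide
  have h8 : ((8 : ℕ) : ℤ) ∣ 2 * (a + b + c + d) := by
    rw [← Nat.cast_ofNat, ← ZMod.intCast_zmod_eq_zero_iff_dvd] at h
    rw [← ZMod.intCast_zmod_eq_zero_iff_dvd]
    push_cast at h ⊢
    exact key _ _ _ _ h
  omega

theorem Int.exists_sum_four_sq_eq_and_add_eq {n t x y z : ℤ} (hn : Even n)
    (h : t ^ 2 + x ^ 2 + y ^ 2 + z ^ 2 = n) :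
    ∃ a b c d : ℤ, a ^ 2 + b ^ 2 + c ^ 2 + d ^ 2 = n ∧ a + b + c + d = 2 * t := by
  obtain ⟨a, ha⟩ : Even (t + x + y + z) := by
    rw [← h] at hn
    simpa [Int.even_add, Int.even_pow] using hn
  refine ⟨a, a - y - z, a - x - z, a - x - y, ?_, by linarith⟩
  linear_combination (x + y + z - t - 2 * a) * ha + h

theorem twice_odd_T_in_spectrum_general (n T : ℤ) (hT : ∃ t : ℤ, Odd t ∧ T = 2 * t)
    (hle : T^2 ≤ 4 * n) (hpar : Even n) :
    (∃ a b c d : ℤ, a^2 + b^2 + c^2 + d^2 = n ∧ a + b + c + d = T) ↔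
      ¬ ((8 : ℤ) ∣ n) := by
  obtain ⟨t, ht, rfl⟩ := hT
  constructor
  · rintro ⟨a, b, c, d, hsq, hsum⟩ h8
    have h4 := Int.four_dvd_add_of_eight_dvd_sum_sq (hsq ▸ h8)
    rw [hsum] at h4
    obtain ⟨k, rfl⟩ := ht
    omega
  · intro h8
    obtain ⟨m, hm⟩ : ∃ m : ℕ, (m : ℤ) = n - t ^ 2 :=
      ⟨(n - t ^ 2).toNat, Int.toNat_of_nonneg (by nlinarith)⟩
    have hodd : Odd m := by
      rw [← Int.odd_coe_nat, hm]
      exact hpar.sub_odd ht.pow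
    have h7 : m % 8 ≠ 7 := by
      have := Int.eight_dvd_sq_sub_one_of_odd ht
      omega
    obtain ⟨x, y, z, hxyz⟩ := Nat.exists_sum_three_sq_of_odd hodd h7
    exact Int.exists_sum_four_sq_eq_and_add_eq hpar (x := x) (y := y) (z := z)
      (by linear_combination hxyz + hm)

theorem twice_odd_T_in_spectrum (n T : ℤ) (hT : ∃ t : ℤ, Odd t ∧ T = 2 * t)
    (hn : 0 < n) (hle : T^2 ≤ 4 * n) (hpar : Even n) :
    (∃ a b c d : ℤ, a^2 + b^2 + c^2 + d^2 = n ∧ a + b + c + d = T) ↔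
      ¬ ((8 : ℤ) ∣ n) :=
  twice_odd_T_in_spectrum_general n T hT hle hpar
end
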